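/- arXiv:1812.08808 — 2 statements merged into one kernel-verified Lean document; each statement's English description precedes it below -/
import Mathlib

section
/- Let A be a real m×n matrix and let s ≤ n. Every s-sparse vector x ∈ ℝⁿ is the unique solution of the basis pursuit problem min ‖x'‖₁ subject to A x' = A x (i.e., for every s-sparse x and every x' ∈ ℝⁿ with A x' = A x and ‖x'‖₁ ≤ ‖x‖₁ one has x' = x) if and only if A satisfies the null space property of order s. -/
/-!
If `x` is supported on `S`, then `‖x - v‖₁ ≥ ‖x‖₁ - ‖v_S‖₁ + ‖v_{Sᶜ}‖₁` for every `v`, so the null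
space property makes every feasible competitor `x - v ≠ x` (with `A v = 0`) strictly longer
than `x`. Conversely,
a kernel vector `v` violating the property gives the `s`-sparse vector `v_S` a competitor
`v_S - v = -v_{Sᶜ}` with the same measurements and no larger ℓ₁ norm.
-/

/-- The ℓ₁ norm of a vector in ℝⁿ. -/
def l1norm {n : ℕ} (x : Fin n → ℝ) : ℝ := ∑ i, |x i|

/-- A vector is `s`-sparse if it has at most `s` nonzero entries. -/
def Sparse {n : ℕ} (s : ℕ) (x : Fin n → ℝ) : Prop :=
  (Finset.univ.filter fun i => x i ≠ 0).card ≤ s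

/-- The null space property of order `s`: every nonzero vector `v` in the null space of `A`
satisfies `‖v_S‖₁ < ‖v_{Sᶜ}‖₁` for every index set `S` of cardinality at most `s`. -/
def NSP {m n : ℕ} (A : Matrix (Fin m) (Fin n) ℝ) (s : ℕ) : Prop :=
  ∀ v : Fin n → ℝ, A.mulVec v = 0 → v ≠ 0 →
    ∀ S : Finset (Fin n), S.card ≤ s → ∑ i ∈ S, |v i| < ∑ i ∈ Sᶜ, |v i|

section

variable {n : ℕ}

theorem l1norm_neg (x : Fin n → ℝ) : l1norm (-x) = l1norm x := by
  simp [l1norm]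

theorem l1norm_indicator (S : Finset (Fin n)) (v : Fin n → ℝ) :
    l1norm ((S : Set (Fin n)).indicator v) = ∑ i ∈ S, |v i| := by
  simp [l1norm, Set.indicator_apply, apply_ite, Finset.sum_ite_mem]

theorem l1norm_indicator_sub_self (S : Finset (Fin n)) (v : Fin n → ℝ) :
    l1norm ((S : Set (Fin n)).indicator v - v) = ∑ i ∈ Sᶜ, |v i| := by
  rw [← neg_sub, ← Set.indicator_compl, ← Finset.coe_compl, l1norm_neg, l1norm_indicator]

theorem l1norm_eq_sum_of_support_subset {x : Fin n → ℝ} {S : Finset (Fin n)}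
    (hx : ∀ i ∉ S, x i = 0) : l1norm x = ∑ i ∈ S, |x i| := by
  rw [l1norm, ← Finset.sum_add_sum_compl S, add_eq_left]
  exact Finset.sum_eq_zero fun i hi => by rw [hx i (Finset.mem_compl.1 hi), abs_zero]

theorem l1norm_add_sum_compl_sub_sum_le_l1norm_sub {x : Fin n → ℝ} {S : Finset (Fin n)}
    (hx : ∀ i ∉ S, x i = 0) (v : Fin n → ℝ) :
    l1norm x + (∑ i ∈ Sᶜ, |v i| - ∑ i ∈ S, |v i|) ≤ l1norm (x - v) := by
  have hS : ∑ i ∈ S, |x i| - ∑ i ∈ S, |v i| ≤ ∑ i ∈ S, |x i - v i| := by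
    rw [← Finset.sum_sub_distrib]
    exact Finset.sum_le_sum fun i _ => abs_sub_abs_le_abs_sub (x i) (v i)
  have hSc : ∑ i ∈ Sᶜ, |x i - v i| = ∑ i ∈ Sᶜ, |v i| :=
    Finset.sum_congr rfl fun i hi => by rw [hx i (Finset.mem_compl.1 hi), zero_sub, abs_neg]
  rw [l1norm_eq_sum_of_support_subset hx, l1norm, ← Finset.sum_add_sum_compl S]
  simp only [Pi.sub_apply]
  linarith

theorem sparse_indicator {s : ℕ} {S : Finset (Fin n)} (hS : S.card ≤ s) (v : Fin n → ℝ) :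
    Sparse s ((S : Set (Fin n)).indicator v) := by
  refine le_trans (Finset.card_le_card fun i hi => ?_) hS
  by_contra hiS
  simp_all

end

theorem basisPursuit_unique_iff_nsp_general {m n : ℕ} (s : ℕ)
    (A : Matrix (Fin m) (Fin n) ℝ) :
    (∀ x : Fin n → ℝ, Sparse s x → ∀ x' : Fin n → ℝ,
      A.mulVec x' = A.mulVec x → l1norm x' ≤ l1norm x → x' = x) ↔ NSP A s := by
  constructor
  · intro hunique v hv hv0 S hS
    by_contra! hviolate
    have hsame : (S : Set (Fin n)).indicator v - v = (S : Set (Fin n)).indicator v :=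
      hunique _ (sparse_indicator hS v) _ (by rw [Matrix.mulVec_sub, hv, sub_zero])
        (by rwa [l1norm_indicator_sub_self, l1norm_indicator])
    exact hv0 (sub_eq_self.1 hsame)
  · intro hnsp x hx x' hAx hle
    by_contra hne
    have hsupp : ∀ i ∉ Finset.univ.filter fun i => x i ≠ 0, x i = 0 := by simp
    have hlt := hnsp (x - x') (by rw [Matrix.mulVec_sub, hAx, sub_self])
      (sub_ne_zero.2 (Ne.symm hne)) _ hx
    have hgrow := l1norm_add_sum_compl_sub_sum_le_l1norm_sub hsupp (x - x')
    rw [sub_sub_cancel] at hgrow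
    linarith

/-- Every `s`-sparse vector `x` is the unique solution of the basis pursuit problem
`min ‖x'‖₁ s.t. A x' = A x` if and only if `A` satisfies the null space property of
order `s`. -/
theorem basisPursuit_unique_iff_nsp {m n : ℕ} (s : ℕ) (hs : s ≤ n)
    (A : Matrix (Fin m) (Fin n) ℝ) :
    (∀ x : Fin n → ℝ, Sparse s x → ∀ x' : Fin n → ℝ,
      A.mulVec x' = A.mulVec x → l1norm x' ≤ l1norm x → x' = x) ↔ NSP A s :=
  basisPursuit_unique_iff_nsp_general s A
end

section
/- Let A be a real m×n matrix and let s ≤ n. If A satisfies the restricted isometry property of order 2s with some constant δ satisfying δ < √2 − 1, then A satisfies the null space property of order s. -/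
/-- `A` satisfies the restricted isometry property of order `t` with constant `δ`. -/
def RIP {m n : ℕ} (A : Matrix (Fin m) (Fin n) ℝ) (t : ℕ) (δ : ℝ) : Prop :=
  ∀ v : Fin n → ℝ, Sparse t v →
    (1 - δ) * ∑ i, (v i) ^ 2 ≤ ∑ i, (A.mulVec v i) ^ 2 ∧
    ∑ i, (A.mulVec v i) ^ 2 ≤ (1 + δ) * ∑ i, (v i) ^ 2

lemma sparse_of_subset {n s : ℕ} {x : Fin n → ℝ} {T : Finset (Fin n)}
    (hT : ∀ i, x i ≠ 0 → i ∈ T) (hc : T.card ≤ s) : Sparse s x := by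
  refine le_trans (Finset.card_le_card ?_) hc
  intro i hi
  simp only [Finset.mem_filter] at hi
  exact hT i hi.2

lemma inner_mulVec_eq {m n : ℕ} (A : Matrix (Fin m) (Fin n) ℝ) (x y : Fin n → ℝ) :
    ∑ i, A.mulVec x i * A.mulVec y i
      = (∑ i, (A.mulVec (x + y) i) ^ 2 - ∑ i, (A.mulVec (x - y) i) ^ 2) / 4 := by
  rw [Matrix.mulVec_add, Matrix.mulVec_sub, ← Finset.sum_sub_distrib, Finset.sum_div]
  refine Finset.sum_congr rfl fun i _ => ?_
  simp only [Pi.add_apply, Pi.sub_apply]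
  ring

lemma ro_half {m n s : ℕ} {A : Matrix (Fin m) (Fin n) ℝ} {δ : ℝ}
    (hRIP : RIP A (2 * s) δ) {x y : Fin n → ℝ}
    (hx : Sparse s x) (hy : Sparse s y) (hdisj : ∀ i, x i = 0 ∨ y i = 0) :
    |∑ i, A.mulVec x i * A.mulVec y i| ≤ δ / 2 * (∑ i, x i ^ 2 + ∑ i, y i ^ 2) := by
  have hsupp : ∀ z : Fin n → ℝ, (∀ i, z i ≠ 0 → x i ≠ 0 ∨ y i ≠ 0) → Sparse (2 * s) z := by
    intro z hz
    refine sparse_of_subset (T := (Finset.univ.filter fun i => x i ≠ 0) ∪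
      (Finset.univ.filter fun i => y i ≠ 0)) (fun i hi => ?_) ?_
    · rcases hz i hi with h | h <;> simp [h]
    · calc _ ≤ _ := Finset.card_union_le _ _
        _ ≤ 2 * s := by rw [two_mul]; exact Nat.add_le_add hx hy
  have hadd : Sparse (2 * s) (x + y) := by
    refine hsupp _ fun i hi => ?_
    by_contra h
    push_neg at h
    exact hi (by simp [Pi.add_apply, h.1, h.2])
  have hsub : Sparse (2 * s) (x - y) := by
    refine hsupp _ fun i hi => ?_
    by_contra h
    push_neg at h
    exact hi (by simp [Pi.sub_apply, h.1, h.2])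
  have hS : ∀ (z : Fin n → ℝ), (∀ i, z i ^ 2 = x i ^ 2 + y i ^ 2) →
      ∑ i, z i ^ 2 = ∑ i, x i ^ 2 + ∑ i, y i ^ 2 := by
    intro z hz
    rw [← Finset.sum_add_distrib]
    exact Finset.sum_congr rfl fun i _ => hz i
  have hps : ∀ i, (x i + y i) ^ 2 = x i ^ 2 + y i ^ 2 := by
    intro i; rcases hdisj i with h | h <;> simp [h] <;> ring
  have hms : ∀ i, (x i - y i) ^ 2 = x i ^ 2 + y i ^ 2 := by
    intro i; rcases hdisj i with h | h <;> simp [h] <;> ring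
  have hSa : ∑ i, ((x + y) i) ^ 2 = ∑ i, x i ^ 2 + ∑ i, y i ^ 2 := hS _ fun i => hps i
  have hSs : ∑ i, ((x - y) i) ^ 2 = ∑ i, x i ^ 2 + ∑ i, y i ^ 2 := hS _ fun i => hms i
  have h1 := hRIP _ hadd
  have h2 := hRIP _ hsub
  rw [hSa] at h1
  rw [hSs] at h2
  rw [inner_mulVec_eq, abs_le]
  constructor <;> nlinarith [h1.1, h1.2, h2.1, h2.2]

lemma sparse_smul {n s : ℕ} {x : Fin n → ℝ} (c : ℝ) (hx : Sparse s x) :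
    Sparse s (fun i => c * x i) := by
  refine le_trans (Finset.card_le_card ?_) hx
  intro i hi
  simp only [Finset.mem_filter, Finset.mem_univ, true_and] at hi ⊢
  intro h; exact hi (by rw [h, mul_zero])

lemma ro {m n s : ℕ} {A : Matrix (Fin m) (Fin n) ℝ} {δ : ℝ} (hδ0 : 0 ≤ δ)
    (hRIP : RIP A (2 * s) δ) {x y : Fin n → ℝ}
    (hx : Sparse s x) (hy : Sparse s y) (hdisj : ∀ i, x i = 0 ∨ y i = 0) :
    |∑ i, A.mulVec x i * A.mulVec y i|
      ≤ δ * Real.sqrt (∑ i, x i ^ 2) * Real.sqrt (∑ i, y i ^ 2) := by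
  set a := Real.sqrt (∑ i, x i ^ 2) with ha
  set b := Real.sqrt (∑ i, y i ^ 2) with hb
  have hxs : (0:ℝ) ≤ ∑ i, x i ^ 2 := Finset.sum_nonneg fun i _ => sq_nonneg _
  have hys : (0:ℝ) ≤ ∑ i, y i ^ 2 := Finset.sum_nonneg fun i _ => sq_nonneg _
  have ha2 : a ^ 2 = ∑ i, x i ^ 2 := Real.sq_sqrt hxs
  have hb2 : b ^ 2 = ∑ i, y i ^ 2 := Real.sq_sqrt hys
  have ha0 : 0 ≤ a := Real.sqrt_nonneg _
  have hb0 : 0 ≤ b := Real.sqrt_nonneg _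
  rcases eq_or_lt_of_le ha0 with haz | hap
  · -- a = 0 ⇒ x = 0
    have hx0 : ∀ i, x i = 0 := by
      intro i
      have : ∑ i, x i ^ 2 = 0 := by rw [← ha2, ← haz]; ring
      have := (Finset.sum_eq_zero_iff_of_nonneg (fun i _ => sq_nonneg (x i))).mp this i
        (Finset.mem_univ i)
      exact pow_eq_zero_iff (by norm_num) |>.mp this
    have : ∀ i, A.mulVec x i = 0 := by
      intro i
      simp [Matrix.mulVec, dotProduct, funext hx0]
    simp [this]
    positivity
  rcases eq_or_lt_of_le hb0 with hbz | hbp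
  · have hy0 : ∀ i, y i = 0 := by
      intro i
      have : ∑ i, y i ^ 2 = 0 := by rw [← hb2, ← hbz]; ring
      have := (Finset.sum_eq_zero_iff_of_nonneg (fun i _ => sq_nonneg (y i))).mp this i
        (Finset.mem_univ i)
      exact pow_eq_zero_iff (by norm_num) |>.mp this
    have : ∀ i, A.mulVec y i = 0 := by
      intro i
      simp [Matrix.mulVec, dotProduct, funext hy0]
    simp [this]
    positivity
  -- main case: scale
  set c := Real.sqrt (b / a) with hc
  have hcp : 0 < c := Real.sqrt_pos.mpr (div_pos hbp hap)
  have hc2 : c ^ 2 = b / a := Real.sq_sqrt (le_of_lt (div_pos hbp hap))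
  set x' : Fin n → ℝ := fun i => c * x i with hx'
  set y' : Fin n → ℝ := fun i => c⁻¹ * y i with hy'
  have hx's : Sparse s x' := sparse_smul c hx
  have hy's : Sparse s y' := sparse_smul c⁻¹ hy
  have hdisj' : ∀ i, x' i = 0 ∨ y' i = 0 := by
    intro i
    rcases hdisj i with h | h
    · exact Or.inl (by simp [hx', h])
    · exact Or.inr (by simp [hy', h])
  have hc0 : c ≠ 0 := ne_of_gt hcp
  have hAx' : A.mulVec x' = fun i => c * A.mulVec x i := by
    have : x' = c • x := rfl
    rw [this, Matrix.mulVec_smul]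
    rfl
  have hAy' : A.mulVec y' = fun i => c⁻¹ * A.mulVec y i := by
    have : y' = c⁻¹ • y := rfl
    rw [this, Matrix.mulVec_smul]
    rfl
  have key := ro_half hRIP hx's hy's hdisj'
  have h1 : ∑ i, A.mulVec x' i * A.mulVec y' i = ∑ i, A.mulVec x i * A.mulVec y i := by
    rw [hAx', hAy']
    refine Finset.sum_congr rfl fun i _ => ?_
    rw [show c * A.mulVec x i * (c⁻¹ * A.mulVec y i)
        = (c * c⁻¹) * (A.mulVec x i * A.mulVec y i) from by ring,
      mul_inv_cancel₀ hc0, one_mul]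
  have h2 : ∑ i, x' i ^ 2 = (b / a) * ∑ i, x i ^ 2 := by
    simp only [hx', mul_pow, ← Finset.mul_sum, hc2]
  have h3 : ∑ i, y' i ^ 2 = (a / b) * ∑ i, y i ^ 2 := by
    have : c⁻¹ ^ 2 = a / b := by
      rw [inv_pow, hc2]
      field_simp
    simp only [hy', mul_pow, ← Finset.mul_sum, this]
  rw [h1, h2, h3, ← ha2, ← hb2] at key
  have e2 : (b / a) * a ^ 2 = a * b := by field_simp
  have e3 : (a / b) * b ^ 2 = a * b := by field_simp
  rw [e2, e3] at key
  calc |∑ i, A.mulVec x i * A.mulVec y i| ≤ δ / 2 * (a * b + a * b) := key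
    _ = δ * a * b := by ring

lemma fin_strictMono_le {k n : ℕ} {f : Fin k → Fin n} (hf : StrictMono f) (i : Fin k) :
    (i : ℕ) ≤ (f i : ℕ) := by
  have main : ∀ j : ℕ, ∀ i : Fin k, (i : ℕ) = j → j ≤ (f i : ℕ) := by
    intro j
    induction j with
    | zero => intro i _; exact Nat.zero_le _
    | succ j ih =>
      intro i hi
      have hj : j < k := by omega
      have hlt : (⟨j, hj⟩ : Fin k) < i := by
        simp [Fin.lt_def, hi]
      have h1 : (f ⟨j, hj⟩ : ℕ) < (f i : ℕ) := hf hlt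
      have h2 := ih ⟨j, hj⟩ rfl
      omega
  exact main _ i rfl

lemma top_sum {n s : ℕ} {w : Fin n → ℝ} (hw : ∀ i, 0 ≤ w i)
    (hmono : Antitone w) {S : Finset (Fin n)} (hS : S.card ≤ s) :
    ∑ i ∈ S, w i ≤ ∑ i ∈ Finset.univ.filter (fun i : Fin n => (i : ℕ) < s), w i := by
  classical
  set t := S.card with ht
  have htn : t ≤ n := le_trans (Finset.card_le_univ S) (by simp)
  set f : Fin t → Fin n := fun k => S.orderEmbOfFin rfl k with hf
  have hfs : StrictMono f := (S.orderEmbOfFin rfl).strictMono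
  have hmem : ∀ k, f k ∈ S := fun k => Finset.orderEmbOfFin_mem S rfl k
  have himg : Finset.image f Finset.univ = S := by
    apply Finset.eq_of_subset_of_card_le
    · intro a ha
      rcases Finset.mem_image.mp ha with ⟨k, _, hk⟩
      exact hk ▸ hmem k
    · rw [Finset.card_image_of_injective _ hfs.injective, Finset.card_univ, Fintype.card_fin]
  have hsum1 : ∑ i ∈ S, w i = ∑ k : Fin t, w (f k) := by
    rw [← himg, Finset.sum_image (fun a _ b _ hab => hfs.injective hab)]
  set g : Fin t → Fin n := fun k => Fin.castLE htn k with hg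
  have hstep : ∀ k : Fin t, w (f k) ≤ w (g k) := by
    intro k
    apply hmono
    have := fin_strictMono_le hfs k
    exact Fin.le_def.mpr (by simpa [hg] using this)
  have hsum2 : ∑ k : Fin t, w (f k) ≤ ∑ k : Fin t, w (g k) :=
    Finset.sum_le_sum fun k _ => hstep k
  have hginj : Function.Injective g := fun a b hab => by
    have h2 : ((g a : Fin n) : ℕ) = ((g b : Fin n) : ℕ) := congrArg Fin.val hab
    exact Fin.ext h2
  have hsum3 : ∑ k : Fin t, w (g k) = ∑ i ∈ Finset.image g Finset.univ, w i := by
    rw [Finset.sum_image (fun a _ b _ hab => hginj hab)]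
  have hsub : Finset.image g Finset.univ ⊆
      Finset.univ.filter (fun i : Fin n => (i : ℕ) < s) := by
    intro a ha
    rcases Finset.mem_image.mp ha with ⟨k, _, hk⟩
    simp only [Finset.mem_filter, Finset.mem_univ, true_and]
    rw [← hk]
    calc (g k : ℕ) = (k : ℕ) := rfl
      _ < t := k.isLt
      _ ≤ s := hS
  calc ∑ i ∈ S, w i = ∑ k : Fin t, w (f k) := hsum1
    _ ≤ ∑ k : Fin t, w (g k) := hsum2
    _ = ∑ i ∈ Finset.image g Finset.univ, w i := hsum3
    _ ≤ _ := Finset.sum_le_sum_of_subset_of_nonneg hsub fun i _ _ => hw i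

open Finset in
lemma sorted_core {m n s : ℕ} (hs1 : 1 ≤ s) (hsn : 2 * s < n)
    (B : Matrix (Fin m) (Fin n) ℝ) {δ : ℝ} (hδ0 : 0 ≤ δ) (hδ : δ < Real.sqrt 2 - 1)
    (hRIP : RIP B (2 * s) δ) (u : Fin n → ℝ) (hker : B.mulVec u = 0) (hu : u ≠ 0)
    (hmono : Antitone fun i : Fin n => |u i|) :
    ∑ i ∈ Finset.univ.filter (fun i : Fin n => (i : ℕ) < s), |u i|
      < ∑ i ∈ Finset.univ.filter (fun i : Fin n => s ≤ (i : ℕ)), |u i| := by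
  classical
  have hspos : (0:ℕ) < s := hs1
  have hnpos : (0:ℕ) < n := by omega
  -- √2 facts
  have h2 : Real.sqrt 2 ^ 2 = 2 := Real.sq_sqrt (by norm_num)
  have h2n : (0:ℝ) ≤ Real.sqrt 2 := Real.sqrt_nonneg 2
  have hδ1 : δ < 1 := by nlinarith
  have h1δ : (0:ℝ) < 1 - δ := by linarith
  have hρ : Real.sqrt 2 * δ < 1 - δ := by nlinarith
  -- blocks
  set blk : ℕ → Finset (Fin n) :=
    fun j => Finset.univ.filter (fun i : Fin n => j * s ≤ (i : ℕ) ∧ (i : ℕ) < (j + 1) * s)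
    with hblk
  have mem_blk : ∀ (j : ℕ) (i : Fin n), i ∈ blk j ↔ j * s ≤ (i : ℕ) ∧ (i : ℕ) < (j + 1) * s := by
    intro j i; simp [hblk]
  have blk_div : ∀ i : Fin n, i ∈ blk ((i : ℕ) / s) := by
    intro i
    have hd := Nat.div_add_mod (i : ℕ) s
    have hm := Nat.mod_lt (i : ℕ) hspos
    rw [mem_blk]
    refine ⟨Nat.div_mul_le_self _ _, ?_⟩
    have h1 : (i:ℕ) < s * ((i:ℕ)/s) + s := by omega
    calc (i:ℕ) < s * ((i:ℕ)/s) + s := h1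
      _ = ((i:ℕ)/s + 1) * s := by ring
  have blk_uniq : ∀ (j : ℕ) (i : Fin n), i ∈ blk j → j = (i : ℕ) / s := by
    intro j i hi
    rw [mem_blk] at hi
    exact (Nat.div_eq_of_lt_le hi.1 hi.2).symm
  have card_blk_le : ∀ j, (blk j).card ≤ s := by
    intro j
    have : ((blk j).image Fin.val) ⊆ Finset.Ico (j * s) ((j + 1) * s) := by
      intro k hk
      rcases Finset.mem_image.mp hk with ⟨i, hi, rfl⟩
      rw [mem_blk] at hi
      exact Finset.mem_Ico.mpr hi
    have h1 := Finset.card_le_card this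
    rw [Finset.card_image_of_injective _ Fin.val_injective, Nat.card_Ico] at h1
    calc (blk j).card ≤ (j + 1) * s - j * s := h1
      _ = s := by ring_nf; omega
  have card_blk_full : ∀ j, (blk (j + 1)).Nonempty → (blk j).card = s := by
    intro j ⟨i0, hi0⟩
    rw [mem_blk] at hi0
    have hub : (j + 1) * s ≤ (i0 : ℕ) := hi0.1
    have hin : (i0 : ℕ) < n := i0.isLt
    have himg : (blk j).image Fin.val = Finset.Ico (j * s) ((j + 1) * s) := by
      ext k
      simp only [Finset.mem_image, Finset.mem_Ico]
      constructor
      · rintro ⟨i, hi, rfl⟩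
        rw [mem_blk] at hi; exact hi
      · rintro ⟨h1, h2⟩
        have hkn : k < n := by omega
        exact ⟨⟨k, hkn⟩, (mem_blk _ _).mpr ⟨h1, h2⟩, rfl⟩
    have := congrArg Finset.card himg
    rw [Finset.card_image_of_injective _ Fin.val_injective, Nat.card_Ico] at this
    rw [this]
    ring_nf
    omega
  -- block vectors
  set ub : ℕ → (Fin n → ℝ) := fun j i => if i ∈ blk j then u i else 0 with hub
  have ub_sq : ∀ j, ∑ i, (ub j i) ^ 2 = ∑ i ∈ blk j, u i ^ 2 := by
    intro j
    have h1 : ∀ i, (ub j i) ^ 2 = if i ∈ blk j then u i ^ 2 else 0 := by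
      intro i; by_cases h : i ∈ blk j <;> simp [hub, h]
    rw [Finset.sum_congr rfl fun i _ => h1 i, Finset.sum_ite_mem, Finset.univ_inter]
  have ub_sparse : ∀ j, Sparse s (ub j) := by
    intro j
    refine sparse_of_subset (T := blk j) (fun i hi => ?_) (card_blk_le j)
    by_contra h
    exact hi (by simp [hub, h])
  set q : ℕ → ℝ := fun j => Real.sqrt (∑ i, (ub j i) ^ 2) with hq
  set L : ℕ → ℝ := fun j => ∑ i ∈ blk j, |u i| with hL
  have L_nonneg : ∀ j, 0 ≤ L j := fun j => Finset.sum_nonneg fun i _ => abs_nonneg _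
  have q_nonneg : ∀ j, 0 ≤ q j := fun j => Real.sqrt_nonneg _
  have q_sq : ∀ j, q j ^ 2 = ∑ i, (ub j i) ^ 2 := fun j =>
    Real.sq_sqrt (Finset.sum_nonneg fun i _ => sq_nonneg _)
  have rs_pos : (0:ℝ) < Real.sqrt s :=
    Real.sqrt_pos.mpr (by exact_mod_cast hspos)
  -- step 2 : q (j+1) * √s ≤ L j
  have step2 : ∀ j, q (j + 1) * Real.sqrt s ≤ L j := by
    intro j
    rcases (blk (j + 1)).eq_empty_or_nonempty with he | hne
    · have : q (j + 1) = 0 := by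
        rw [hq]
        simp only
        rw [ub_sq, he]
        simp
      rw [this, zero_mul]
      exact L_nonneg j
    · have hcard : (blk j).card = s := card_blk_full j hne
      have key : ∀ i ∈ blk (j + 1), (s : ℝ) * |u i| ≤ L j := by
        intro i hi
        have hige : (j + 1) * s ≤ (i : ℕ) := ((mem_blk _ _).mp hi).1
        have : ∀ k ∈ blk j, |u i| ≤ |u k| := by
          intro k hk
          apply hmono
          have hklt : (k : ℕ) < (j + 1) * s := ((mem_blk _ _).mp hk).2
          exact Fin.le_def.mpr (by omega)
        calc (s:ℝ) * |u i| = ∑ _k ∈ blk j, |u i| := by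
              rw [Finset.sum_const, hcard, nsmul_eq_mul]
          _ ≤ ∑ k ∈ blk j, |u k| := Finset.sum_le_sum this
          _ = L j := rfl
      -- each |u i| ≤ L j / s, so ∑ sq ≤ s * (L j / s)^2 = (L j)^2 / s
      have hbound : ∑ i, (ub (j+1) i) ^ 2 ≤ (L j) ^ 2 / s := by
        rw [ub_sq]
        have hsR : (0:ℝ) < (s:ℝ) := by exact_mod_cast hspos
        have hterm : ∀ i ∈ blk (j + 1), u i ^ 2 ≤ (L j / s) ^ 2 := by
          intro i hi
          have h1 := key i hi
          have h2 : |u i| ≤ L j / s := by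
            rw [le_div_iff₀ hsR]; linarith [key i hi]
          calc u i ^ 2 = |u i| ^ 2 := (sq_abs _).symm
            _ ≤ (L j / s) ^ 2 := by
                apply pow_le_pow_left₀ (abs_nonneg _) h2
        calc ∑ i ∈ blk (j+1), u i ^ 2 ≤ ∑ _i ∈ blk (j+1), (L j / s) ^ 2 :=
              Finset.sum_le_sum hterm
          _ = (blk (j+1)).card * (L j / s) ^ 2 := by rw [Finset.sum_const, nsmul_eq_mul]
          _ ≤ (s:ℝ) * (L j / s) ^ 2 := by
              apply mul_le_mul_of_nonneg_right _ (sq_nonneg _)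
              exact_mod_cast card_blk_le (j+1)
          _ = (L j) ^ 2 / s := by field_simp
      have hsR : (0:ℝ) ≤ (s:ℝ) := by positivity
      have : q (j + 1) ≤ L j / Real.sqrt s := by
        rw [hq]
        simp only
        calc Real.sqrt (∑ i, (ub (j+1) i) ^ 2) ≤ Real.sqrt ((L j) ^ 2 / s) :=
              Real.sqrt_le_sqrt hbound
          _ = L j / Real.sqrt s := by
              rw [Real.sqrt_div (sq_nonneg _), Real.sqrt_sq (L_nonneg j)]
      calc q (j + 1) * Real.sqrt s ≤ (L j / Real.sqrt s) * Real.sqrt s := by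
            exact mul_le_mul_of_nonneg_right this (le_of_lt rs_pos)
        _ = L j := by field_simp
  -- block 0 and the tail
  have blk0_eq : blk 0 = Finset.univ.filter (fun i : Fin n => (i : ℕ) < s) := by
    ext i
    rw [mem_blk]
    simp
  set R : ℝ := ∑ i ∈ Finset.univ.filter (fun i : Fin n => s ≤ (i : ℕ)), |u i| with hR
  have hRnn : 0 ≤ R := Finset.sum_nonneg fun i _ => abs_nonneg _
  have hdisj_blk : ∀ j1 j2, j1 ≠ j2 → Disjoint (blk j1) (blk j2) := by
    intro j1 j2 hne
    rw [Finset.disjoint_left]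
    intro i h1 h2
    exact hne ((blk_uniq _ _ h1).trans (blk_uniq _ _ h2).symm)
  have tail_eq : ∑ j ∈ Finset.Ico 1 n, L j = R := by
    have hbi : (Finset.Ico 1 n).biUnion blk
        = Finset.univ.filter (fun i : Fin n => s ≤ (i : ℕ)) := by
      ext i
      simp only [Finset.mem_biUnion, Finset.mem_Ico, Finset.mem_filter, Finset.mem_univ, true_and]
      constructor
      · rintro ⟨j, ⟨hj1, _⟩, hj⟩
        have := ((mem_blk _ _).mp hj).1
        nlinarith [this, hj1]
      · intro hsi
        refine ⟨(i : ℕ) / s, ⟨?_, ?_⟩, blk_div i⟩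
        · exact (Nat.one_le_div_iff hspos).mpr hsi
        · exact lt_of_le_of_lt (Nat.div_le_self _ _) i.isLt
    rw [hR, ← hbi, Finset.sum_biUnion]
    intro j1 h1 j2 h2 hne
    exact hdisj_blk j1 j2 hne
  -- decomposition of u
  have hrange : ∀ i : Fin n, ∑ j ∈ Finset.range n, ub j i = u i := by
    intro i
    have hj0 : (i : ℕ) / s ∈ Finset.range n :=
      Finset.mem_range.mpr (lt_of_le_of_lt (Nat.div_le_self _ _) i.isLt)
    rw [Finset.sum_eq_single_of_mem _ hj0]
    · simp [hub, blk_div i]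
    · intro b _ hb
      have : i ∉ blk b := fun h => hb (blk_uniq _ _ h)
      simp [hub, this]
  have hn2 : 2 < n := by omega
  have hrsplit : Finset.range n = insert 0 (insert 1 (Finset.Ico 2 n)) := by
    ext j
    simp only [Finset.mem_range, Finset.mem_insert, Finset.mem_Ico]
    omega
  set x : Fin n → ℝ := ub 0 + ub 1 with hx
  set y : Fin n → ℝ := ∑ j ∈ Finset.Ico 2 n, ub j with hy
  have husum : ∀ i, u i = x i + y i := by
    intro i
    have h1 : (0:ℕ) ∉ insert 1 (Finset.Ico 2 n) := by simp
    have h2 : (1:ℕ) ∉ Finset.Ico 2 n := by simp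
    have := hrange i
    rw [hrsplit, Finset.sum_insert h1, Finset.sum_insert h2] at this
    rw [← this, hx, hy]
    simp [Finset.sum_apply]
    ring
  have hxyu : x + y = u := by
    funext i
    rw [Pi.add_apply, ← husum i]
  -- kernel identity
  have hBy : B.mulVec y = ∑ j ∈ Finset.Ico 2 n, B.mulVec (ub j) := by
    rw [hy, ← Matrix.mulVecLin_apply, map_sum]
    simp [Matrix.mulVecLin_apply]
  have hBxy : B.mulVec x = - B.mulVec y := by
    have h0 : B.mulVec x + B.mulVec y = 0 := by rw [← Matrix.mulVec_add, hxyu, hker]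
    exact eq_neg_of_add_eq_zero_left h0
  -- quantities
  set qx : ℝ := Real.sqrt (∑ i, x i ^ 2) with hqx
  have hx2nn : (0:ℝ) ≤ ∑ i, x i ^ 2 := Finset.sum_nonneg fun i _ => sq_nonneg _
  have hqx2 : qx ^ 2 = ∑ i, x i ^ 2 := Real.sq_sqrt hx2nn
  have hqxnn : 0 ≤ qx := Real.sqrt_nonneg _
  have hdisj01 : ∀ i, ub 0 i = 0 ∨ ub 1 i = 0 := by
    intro i
    by_cases h : i ∈ blk 0
    · right
      have : i ∉ blk 1 := fun h1 => by
        have e0 := blk_uniq _ _ h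
        have e1 := blk_uniq _ _ h1
        omega
      simp [hub, this]
    · left; simp [hub, h]
  have hx2eq : ∑ i, x i ^ 2 = q 0 ^ 2 + q 1 ^ 2 := by
    rw [q_sq, q_sq, ← Finset.sum_add_distrib]
    refine Finset.sum_congr rfl fun i _ => ?_
    rw [hx]
    rcases hdisj01 i with h | h <;> rw [Pi.add_apply, h] <;> ring
  have hq01 : q 0 + q 1 ≤ Real.sqrt 2 * qx := by
    have hsq : (q 0 + q 1) ^ 2 ≤ (Real.sqrt 2 * qx) ^ 2 := by
      have : (Real.sqrt 2 * qx) ^ 2 = 2 * (q 0 ^ 2 + q 1 ^ 2) := by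
        rw [mul_pow, h2, hqx2, hx2eq]
      nlinarith [sq_nonneg (q 0 - q 1)]
    have := Real.sqrt_le_sqrt hsq
    rwa [Real.sqrt_sq (add_nonneg (q_nonneg 0) (q_nonneg 1)), Real.sqrt_sq (mul_nonneg h2n hqxnn)] at this
  -- sparsity of x
  have hxsp : Sparse (2 * s) x := by
    refine sparse_of_subset (T := blk 0 ∪ blk 1) (fun i hi => ?_) ?_
    · by_contra h
      simp only [Finset.mem_union, not_or] at h
      have : x i = 0 := by rw [hx]; simp [hub, h.1, h.2]
      exact hi this
    · calc (blk 0 ∪ blk 1).card ≤ (blk 0).card + (blk 1).card := Finset.card_union_le _ _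
        _ ≤ 2 * s := by have := card_blk_le 0; have := card_blk_le 1; omega
  -- the main estimate
  set T : ℝ := ∑ j ∈ Finset.Ico 2 n, q j with hT
  have hTnn : 0 ≤ T := Finset.sum_nonneg fun j _ => q_nonneg j
  set P : ℝ := ∑ i, (B.mulVec x i) ^ 2 with hP
  have hPa : P = - ∑ i, B.mulVec x i * B.mulVec y i := by
    rw [hP, ← Finset.sum_neg_distrib]
    refine Finset.sum_congr rfl fun i _ => ?_
    have hyi : B.mulVec y i = - B.mulVec x i := by rw [hBxy]; simp
    rw [hyi]; ring
  have hPb : ∑ i, B.mulVec x i * B.mulVec y i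
      = ∑ j ∈ Finset.Ico 2 n, ∑ i, B.mulVec x i * B.mulVec (ub j) i := by
    calc ∑ i, B.mulVec x i * B.mulVec y i
        = ∑ i, ∑ j ∈ Finset.Ico 2 n, B.mulVec x i * B.mulVec (ub j) i := by
          refine Finset.sum_congr rfl fun i _ => ?_
          rw [hBy, Finset.sum_apply, Finset.mul_sum]
      _ = _ := Finset.sum_comm
  -- bound each term via restricted orthogonality
  have hterm : ∀ j ∈ Finset.Ico 2 n,
      - ∑ i, B.mulVec x i * B.mulVec (ub j) i ≤ δ * (q 0 + q 1) * q j := by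
    intro j hj
    have hj2 : 2 ≤ j := (Finset.mem_Ico.mp hj).1
    have hdisj0j : ∀ i, ub 0 i = 0 ∨ ub j i = 0 := by
      intro i
      by_cases h : i ∈ blk 0
      · right
        have : i ∉ blk j := fun hh => by
          have e0 := blk_uniq _ _ h; have e1 := blk_uniq _ _ hh; omega
        simp [hub, this]
      · left; simp [hub, h]
    have hdisj1j : ∀ i, ub 1 i = 0 ∨ ub j i = 0 := by
      intro i
      by_cases h : i ∈ blk 1
      · right
        have : i ∉ blk j := fun hh => by
          have e0 := blk_uniq _ _ h; have e1 := blk_uniq _ _ hh; omega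
        simp [hub, this]
      · left; simp [hub, h]
    have h0j := ro hδ0 hRIP (ub_sparse 0) (ub_sparse j) hdisj0j
    have h1j := ro hδ0 hRIP (ub_sparse 1) (ub_sparse j) hdisj1j
    have hsplit : ∑ i, B.mulVec x i * B.mulVec (ub j) i
        = ∑ i, B.mulVec (ub 0) i * B.mulVec (ub j) i
          + ∑ i, B.mulVec (ub 1) i * B.mulVec (ub j) i := by
      rw [← Finset.sum_add_distrib]
      refine Finset.sum_congr rfl fun i _ => ?_
      have : B.mulVec x i = B.mulVec (ub 0) i + B.mulVec (ub 1) i := by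
        rw [hx, Matrix.mulVec_add]; rfl
      rw [this]; ring
    have e0 : Real.sqrt (∑ i, ub 0 i ^ 2) = q 0 := rfl
    have e1 : Real.sqrt (∑ i, ub 1 i ^ 2) = q 1 := rfl
    have ej : Real.sqrt (∑ i, ub j i ^ 2) = q j := rfl
    rw [e0, ej] at h0j
    rw [e1, ej] at h1j
    have b0 := neg_le.mpr (neg_le_of_abs_le h0j)
    have b1 := neg_le.mpr (neg_le_of_abs_le h1j)
    rw [hsplit]
    have expand : δ * (q 0 + q 1) * q j = δ * q 0 * q j + δ * q 1 * q j := by ring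
    rw [expand, neg_add]
    exact add_le_add b0 b1
  have hPT : P ≤ δ * (q 0 + q 1) * T := by
    rw [hPa, hPb, ← Finset.sum_neg_distrib]
    calc ∑ j ∈ Finset.Ico 2 n, -∑ i, B.mulVec x i * B.mulVec (ub j) i
        ≤ ∑ j ∈ Finset.Ico 2 n, δ * (q 0 + q 1) * q j :=
          Finset.sum_le_sum hterm
      _ = δ * (q 0 + q 1) * T := by rw [hT, Finset.mul_sum]
  -- RIP lower bound on P
  have hRIPx := (hRIP x hxsp).1
  -- T * √s ≤ R
  have hTs : T * Real.sqrt s ≤ R := by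
    have h1 : T * Real.sqrt s = ∑ j ∈ Finset.Ico 2 n, q j * Real.sqrt s := by
      rw [hT, Finset.sum_mul]
    have h2' : ∀ j ∈ Finset.Ico 2 n, q j * Real.sqrt s ≤ L (j - 1) := by
      intro j hj
      have hj2 : 2 ≤ j := (Finset.mem_Ico.mp hj).1
      have : j = (j - 1) + 1 := by omega
      rw [this]
      exact step2 (j - 1)
    have h3 : ∑ j ∈ Finset.Ico 2 n, L (j - 1) = ∑ k ∈ Finset.range (n - 2), L (1 + k) := by
      rw [Finset.sum_Ico_eq_sum_range]
      refine Finset.sum_congr rfl fun k _ => ?_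
      congr 1
      omega
    have h4 : ∑ j ∈ Finset.Ico 1 n, L j = ∑ k ∈ Finset.range (n - 1), L (1 + k) := by
      rw [Finset.sum_Ico_eq_sum_range]
    have h5 : ∑ k ∈ Finset.range (n - 2), L (1 + k) ≤ ∑ k ∈ Finset.range (n - 1), L (1 + k) := by
      apply Finset.sum_le_sum_of_subset_of_nonneg
      · exact Finset.range_subset_range.mpr (by omega)
      · intro k _ _; exact L_nonneg _
    calc T * Real.sqrt s = ∑ j ∈ Finset.Ico 2 n, q j * Real.sqrt s := h1
      _ ≤ ∑ j ∈ Finset.Ico 2 n, L (j - 1) := Finset.sum_le_sum h2'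
      _ = ∑ k ∈ Finset.range (n - 2), L (1 + k) := h3
      _ ≤ ∑ k ∈ Finset.range (n - 1), L (1 + k) := h5
      _ = ∑ j ∈ Finset.Ico 1 n, L j := h4.symm
      _ = R := tail_eq
  -- qx > 0
  have hqxpos : 0 < qx := by
    have hex : ∃ i, u i ≠ 0 := by
      by_contra h
      push_neg at h
      exact hu (funext h)
    obtain ⟨i1, hi1⟩ := hex
    set i0 : Fin n := ⟨0, hnpos⟩ with hi0
    have hmle : |u i1| ≤ |u i0| := hmono (Fin.le_def.mpr (Nat.zero_le _))
    have hu0 : u i0 ≠ 0 := by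
      intro h
      rw [hi0] at h
      have : |u i1| ≤ 0 := by rw [← abs_zero (α := ℝ), ← h]; exact hmle
      exact hi1 (abs_eq_zero.mp (le_antisymm this (abs_nonneg _)))
    have hv0 : (i0 : ℕ) = 0 := rfl
    have hmem0 : i0 ∈ blk 0 := by
      rw [mem_blk, hv0]; omega
    have hnmem1 : i0 ∉ blk 1 := by
      rw [mem_blk, hv0]; omega
    have hxi0 : x i0 = u i0 := by
      rw [hx, Pi.add_apply]
      simp [hub, hmem0, hnmem1]
    have hsum_pos : 0 < ∑ i, x i ^ 2 := by
      have h1 : x i0 ^ 2 ≤ ∑ i, x i ^ 2 :=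
        Finset.single_le_sum (fun i _ => sq_nonneg (x i)) (Finset.mem_univ i0)
      have h2 : 0 < x i0 ^ 2 := by
        rw [hxi0]
        exact pow_two_pos_of_ne_zero hu0
      linarith
    rw [hqx]
    exact Real.sqrt_pos.mpr hsum_pos
  -- main chain
  have hc1 : (1 - δ) * qx ^ 2 ≤ δ * (q 0 + q 1) * T := by
    rw [hqx2]
    exact le_trans hRIPx hPT
  have hc2 : δ * (q 0 + q 1) * T ≤ δ * (Real.sqrt 2 * qx) * T :=
    mul_le_mul_of_nonneg_right (mul_le_mul_of_nonneg_left hq01 hδ0) hTnn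
  have hc34 : (1 - δ) * qx ^ 2 * Real.sqrt s ≤ Real.sqrt 2 * δ * qx * R := by
    have hc3 : (1 - δ) * qx ^ 2 * Real.sqrt s ≤ Real.sqrt 2 * δ * qx * (T * Real.sqrt s) := by
      calc (1 - δ) * qx ^ 2 * Real.sqrt s ≤ (δ * (Real.sqrt 2 * qx) * T) * Real.sqrt s :=
            mul_le_mul_of_nonneg_right (le_trans hc1 hc2) rs_pos.le
        _ = Real.sqrt 2 * δ * qx * (T * Real.sqrt s) := by ring
    have hc4 : Real.sqrt 2 * δ * qx * (T * Real.sqrt s) ≤ Real.sqrt 2 * δ * qx * R :=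
      mul_le_mul_of_nonneg_left hTs (mul_nonneg (mul_nonneg h2n hδ0) hqxnn)
    exact le_trans hc3 hc4
  have hc5 : (1 - δ) * qx * Real.sqrt s ≤ Real.sqrt 2 * δ * R := by
    refine le_of_mul_le_mul_left ?_ hqxpos
    calc qx * ((1 - δ) * qx * Real.sqrt s) = (1 - δ) * qx ^ 2 * Real.sqrt s := by ring
      _ ≤ Real.sqrt 2 * δ * qx * R := hc34
      _ = qx * (Real.sqrt 2 * δ * R) := by ring
  -- Cauchy–Schwarz : L 0 ≤ √s * q 0
  have hsnn : (0:ℝ) ≤ (s:ℝ) := Nat.cast_nonneg s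
  have hCS : (L 0) ^ 2 ≤ (s:ℝ) * q 0 ^ 2 := by
    have h := Finset.sum_mul_sq_le_sq_mul_sq (blk 0) (fun i => |u i|) (fun _ => (1:ℝ))
    have e1 : ∑ i ∈ blk 0, |u i| * 1 = L 0 := by
      rw [hL]; exact Finset.sum_congr rfl fun i _ => mul_one _
    have e2 : ∑ i ∈ blk 0, |u i| ^ 2 = q 0 ^ 2 := by
      rw [q_sq, ub_sq]
      exact Finset.sum_congr rfl fun i _ => sq_abs _
    have e3 : ∑ _i ∈ blk 0, (1:ℝ) ^ 2 ≤ (s:ℝ) := by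
      simp only [one_pow, Finset.sum_const, nsmul_eq_mul, mul_one]
      exact_mod_cast card_blk_le 0
    rw [e1, e2] at h
    calc (L 0) ^ 2 ≤ q 0 ^ 2 * ∑ _i ∈ blk 0, (1:ℝ) ^ 2 := h
      _ ≤ q 0 ^ 2 * (s:ℝ) := mul_le_mul_of_nonneg_left e3 (sq_nonneg _)
      _ = (s:ℝ) * q 0 ^ 2 := by ring
  have hL0 : L 0 ≤ Real.sqrt s * q 0 := by
    have hb : (Real.sqrt s * q 0) ^ 2 = (s:ℝ) * q 0 ^ 2 := by
      rw [mul_pow, Real.sq_sqrt hsnn]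
    have h := Real.sqrt_le_sqrt (show (L 0) ^ 2 ≤ (Real.sqrt s * q 0) ^ 2 by rw [hb]; exact hCS)
    rwa [Real.sqrt_sq (L_nonneg 0), Real.sqrt_sq (mul_nonneg rs_pos.le (q_nonneg 0))] at h
  have hq0qx : q 0 ≤ qx := by
    have hsq : q 0 ^ 2 ≤ qx ^ 2 := by
      rw [hqx2, hx2eq]
      exact le_add_of_nonneg_right (sq_nonneg _)
    have h := Real.sqrt_le_sqrt hsq
    rwa [Real.sqrt_sq (q_nonneg 0), Real.sqrt_sq hqxnn] at h
  -- R > 0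
  have hRpos : 0 < R := by
    by_contra hnR
    have hR0 : R = 0 := le_antisymm (not_lt.mp hnR) hRnn
    have hz := (Finset.sum_eq_zero_iff_of_nonneg
      (fun i (_ : i ∈ Finset.univ.filter (fun i : Fin n => s ≤ (i : ℕ))) => abs_nonneg (u i))).mp
      (by rw [← hR, hR0])
    have husp : Sparse (2 * s) u := by
      refine sparse_of_subset (T := blk 0) (fun i hi => ?_)
        (le_trans (card_blk_le 0) (by omega))
      by_cases hcase : (i : ℕ) < s
      · rw [mem_blk]; omega
      · exfalso
        have hmem : i ∈ Finset.univ.filter (fun i : Fin n => s ≤ (i : ℕ)) := by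
          simp only [Finset.mem_filter, Finset.mem_univ, true_and]; omega
        exact hi (abs_eq_zero.mp (hz i hmem))
    have hR1 := (hRIP u husp).1
    have hz2 : ∑ i, (B.mulVec u i) ^ 2 = 0 := by rw [hker]; simp
    rw [hz2] at hR1
    have hnn : (0:ℝ) ≤ ∑ i, u i ^ 2 := Finset.sum_nonneg fun i _ => sq_nonneg _
    have hsum0 : ∑ i, u i ^ 2 = 0 := by
      refine le_antisymm ?_ hnn
      by_contra hpos
      push_neg at hpos
      exact absurd hR1 (not_le.mpr (mul_pos h1δ hpos))
    have : ∀ i, u i = 0 := by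
      intro i
      have := (Finset.sum_eq_zero_iff_of_nonneg (fun i _ => sq_nonneg (u i))).mp hsum0 i
        (Finset.mem_univ i)
      exact pow_eq_zero_iff (n := 2) (by norm_num) |>.mp this
    exact hu (funext this)
  -- finish
  have s1 : L 0 ≤ Real.sqrt s * qx := le_trans hL0 (mul_le_mul_of_nonneg_left hq0qx rs_pos.le)
  have s2 : (1 - δ) * (Real.sqrt s * qx) ≤ Real.sqrt 2 * δ * R := by
    calc (1 - δ) * (Real.sqrt s * qx) = (1 - δ) * qx * Real.sqrt s := by ring
      _ ≤ Real.sqrt 2 * δ * R := hc5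
  have s3 : Real.sqrt 2 * δ * R < (1 - δ) * R := mul_lt_mul_of_pos_right hρ hRpos
  have s5 : Real.sqrt s * qx < R := lt_of_mul_lt_mul_left (lt_of_le_of_lt s2 s3) h1δ.le
  have hfinal : L 0 < R := lt_of_le_of_lt s1 s5
  calc ∑ i ∈ Finset.univ.filter (fun i : Fin n => (i : ℕ) < s), |u i|
      = L 0 := Finset.sum_congr blk0_eq.symm (fun i _ => rfl)
    _ < R := hfinal

/-- If `A` satisfies the RIP of order `2s` with constant `δ < √2 − 1`, then `A`
satisfies the null space property of order `s`. -/
theorem rip_implies_nsp {m n : ℕ} (s : ℕ) (hs : s ≤ n) (A : Matrix (Fin m) (Fin n) ℝ)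
    (δ : ℝ) (hδ0 : 0 ≤ δ) (hδ : δ < Real.sqrt 2 - 1) (hRIP : RIP A (2 * s) δ) :
    NSP A s := by
  classical
  have h2 : Real.sqrt 2 ^ 2 = 2 := Real.sq_sqrt (by norm_num)
  have h2n : (0:ℝ) ≤ Real.sqrt 2 := Real.sqrt_nonneg 2
  have hδ1 : δ < 1 := by nlinarith
  have h1δ : (0:ℝ) < 1 - δ := by linarith
  intro v hker hv S hS
  by_cases hcase : n ≤ 2 * s
  · -- every vector is 2s-sparse; kernel is trivial
    exfalso
    have hsp : Sparse (2 * s) v := by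
      unfold Sparse
      calc (Finset.univ.filter fun i => v i ≠ 0).card ≤ Finset.univ.card :=
            Finset.card_filter_le _ _
        _ = n := by simp
        _ ≤ 2 * s := hcase
    have h1 := (hRIP v hsp).1
    have hz : ∑ i, (A.mulVec v i) ^ 2 = 0 := by rw [hker]; simp
    rw [hz] at h1
    have hnn : (0:ℝ) ≤ ∑ i, v i ^ 2 := Finset.sum_nonneg fun i _ => sq_nonneg _
    have hsum0 : ∑ i, v i ^ 2 = 0 := by
      refine le_antisymm ?_ hnn
      by_contra hpos
      push_neg at hpos
      exact absurd h1 (not_le.mpr (mul_pos h1δ hpos))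
    refine hv (funext fun i => ?_)
    have := (Finset.sum_eq_zero_iff_of_nonneg (fun i _ => sq_nonneg (v i))).mp hsum0 i
      (Finset.mem_univ i)
    exact pow_eq_zero_iff (n := 2) (by norm_num) |>.mp this
  push_neg at hcase
  by_cases hs0 : s = 0
  · subst hs0
    have hSempty : S = ∅ := Finset.card_eq_zero.mp (Nat.le_zero.mp hS)
    subst hSempty
    rw [Finset.sum_empty, Finset.compl_empty]
    obtain ⟨i, hi⟩ : ∃ i, v i ≠ 0 := by
      by_contra h
      push_neg at h
      exact hv (funext h)
    exact Finset.sum_pos' (fun i _ => abs_nonneg _) ⟨i, Finset.mem_univ i, abs_pos.mpr hi⟩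
  have hs1 : 1 ≤ s := Nat.one_le_iff_ne_zero.mpr hs0
  -- sort |v| in decreasing order
  set σ : Equiv.Perm (Fin n) := Tuple.sort (fun i => -|v i|) with hσ
  set u : Fin n → ℝ := fun j => v (σ j) with huu
  set B : Matrix (Fin m) (Fin n) ℝ := A.submatrix id ⇑σ with hB
  have hmono : Antitone fun j : Fin n => |u j| := by
    intro a b hab
    have := Tuple.monotone_sort (fun i => -|v i|) hab
    simp only [Function.comp_apply] at this
    simp only [huu]
    linarith
  have hBu : B.mulVec u = A.mulVec v := by
    rw [hB, Matrix.submatrix_mulVec_equiv]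
    have : u ∘ ⇑σ.symm = v := by
      funext i
      simp [huu]
    rw [this]
    rfl
  have hkeru : B.mulVec u = 0 := by rw [hBu, hker]
  have hu0 : u ≠ 0 := by
    intro h
    refine hv (funext fun i => ?_)
    have : u (σ.symm i) = 0 := by rw [h]; rfl
    simpa [huu] using this
  have hRIPB : RIP B (2 * s) δ := by
    intro w hw
    have h1 : B.mulVec w = A.mulVec (w ∘ ⇑σ.symm) := by
      rw [hB, Matrix.submatrix_mulVec_equiv]
      rfl
    have hsp : Sparse (2 * s) (w ∘ ⇑σ.symm) := by
      unfold Sparse at hw ⊢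
      have himg : (Finset.univ.filter fun i => (w ∘ ⇑σ.symm) i ≠ 0)
          = (Finset.univ.filter fun i => w i ≠ 0).map σ.toEmbedding := by
        ext i
        simp only [Finset.mem_filter, Finset.mem_univ, true_and, Finset.mem_map,
          Equiv.coe_toEmbedding, Function.comp_apply]
        constructor
        · intro h
          exact ⟨σ.symm i, h, Equiv.apply_symm_apply _ _⟩
        · rintro ⟨j, hj, rfl⟩
          rwa [Equiv.symm_apply_apply]
      rw [himg, Finset.card_map]
      exact hw
    have hsum : ∑ i, (w ∘ ⇑σ.symm) i ^ 2 = ∑ i, w i ^ 2 :=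
      Equiv.sum_comp σ.symm (fun i => w i ^ 2)
    have := hRIP _ hsp
    rw [hsum, ← h1] at this
    exact this
  have core := sorted_core hs1 hcase B hδ0 hδ hRIPB u hkeru hu0 hmono
  -- transfer back
  set S' : Finset (Fin n) := S.image ⇑σ.symm with hS'
  have hcard' : S'.card = S.card := Finset.card_image_of_injective _ σ.symm.injective
  have hSsum : ∑ j ∈ S', |u j| = ∑ i ∈ S, |v i| := by
    rw [hS', Finset.sum_image (fun a _ b _ hab => σ.symm.injective hab)]
    refine Finset.sum_congr rfl fun i _ => ?_
    simp [huu]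
  have htop : ∑ j ∈ S', |u j| ≤ ∑ j ∈ Finset.univ.filter (fun j : Fin n => (j : ℕ) < s), |u j| :=
    top_sum (fun j => abs_nonneg _) hmono (le_trans (le_of_eq hcard') hS)
  have htotal : ∑ i, |v i| = ∑ j, |u j| := (Equiv.sum_comp σ (fun i => |v i|)).symm
  have hcomplS : ∑ i ∈ Sᶜ, |v i| + ∑ i ∈ S, |v i| = ∑ i, |v i| :=
    Finset.sum_compl_add_sum S _
  have hfcompl : (Finset.univ.filter (fun j : Fin n => (j : ℕ) < s))ᶜ
      = Finset.univ.filter (fun j : Fin n => s ≤ (j : ℕ)) := by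
    ext j
    simp only [Finset.mem_compl, Finset.mem_filter, Finset.mem_univ, true_and]
    omega
  have hcomplF : ∑ j ∈ Finset.univ.filter (fun j : Fin n => s ≤ (j : ℕ)), |u j|
      + ∑ j ∈ Finset.univ.filter (fun j : Fin n => (j : ℕ) < s), |u j| = ∑ j, |u j| := by
    rw [← hfcompl]
    exact Finset.sum_compl_add_sum _ _
  linarith [core, htop, hSsum, htotal, hcomplS, hcomplF]
end
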